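/- The set of leaf partitions induced by internal edges is an invariant that changes by at most one element per rotation: if T' is obtained from T by one rotation, then the symmetric difference of the sets of leaf-partitions induced by internal edges of T and T' has size at most 2 (each tree has at most one edge not common with the other). -/

import Mathlib

inductive BT : Type
  | leaf : BT
  | node : BT → BT → BT
deriving DecidableEq

namespace BT

/-- number of internal nodes -/
def size : BT → ℕ
  | leaf => 0
  | node l r => size l + size r + 1

/-- number of leaves -/
def nl (t : BT) : ℕ := size t + 1

/-- one (right) rotation somewhere in the tree -/
inductive Rot : BT → BT → Prop
  | root (a b c : BT) : Rot (node (node a b) c) (node a (node b c))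
  | congrL {l l' : BT} (r : BT) : Rot l l' → Rot (node l r) (node l' r)
  | congrR (l : BT) {r r' : BT} : Rot r r' → Rot (node l r) (node l r')

/-- a rotation move: a right rotation or its inverse (a left rotation) -/
def Move (s t : BT) : Prop := Rot s t ∨ Rot t s

/-- `Chain n s t`: `s` is transformed into `t` by `n` rotation moves -/
inductive Chain : ℕ → BT → BT → Prop
  | refl (t : BT) : Chain 0 t t
  | step {n : ℕ} {s u t : BT} : Move s u → Chain n u t → Chain (n + 1) s t

/-- rotation distance -/
noncomputable def dR (s t : BT) : ℕ := sInf {n | Chain n s t}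

def isNode : BT → Bool
  | leaf => false
  | node _ _ => true

/-- the multiset of leaf partitions induced by internal edges, where the leaves of the
tree are numbered from `k` on, left to right; each internal edge is recorded by the
set of leaf numbers below it. -/
def iparts : BT → ℕ → Multiset (Finset ℕ)
  | leaf, _ => 0
  | node l r, k =>
      ((if isNode l then {Finset.Ico k (k + nl l)} else 0) + iparts l k)
        + ((if isNode r then {Finset.Ico (k + nl l) (k + nl l + nl r)} else 0)
            + iparts r (k + nl l))

/-- number of common edge pairs -/
def commonEdges (s t : BT) : ℕ := ((iparts s 0) ∩ (iparts t 0)).card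

lemma nl_node (l r : BT) : nl (node l r) = nl l + nl r := by
  simp only [nl, size]; omega

lemma isNode_node (l r : BT) : isNode (node l r) = true := rfl

lemma Rot.nl_eq {s t : BT} (h : Rot s t) : nl s = nl t := by
  induction h with
  | root a b c => simp only [nl_node]; omega
  | congrL r _ ih => rw [nl_node, nl_node, ih]
  | congrR l _ ih => rw [nl_node, nl_node, ih]

lemma Rot.isNode_left {s t : BT} (h : Rot s t) : isNode s = true := by
  cases h <;> rfl

lemma Rot.isNode_right {s t : BT} (h : Rot s t) : isNode t = true := by
  cases h <;> rfl

/-- At the root of `node (node a b) c` the edge above the leaves of `a, b` is exchanged for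
the edge above those of `b, c`; every other edge keeps its leaf set. -/
lemma Rot.exists_iparts_eq_cons {s t : BT} (h : Rot s t) (k : ℕ) :
    ∃ M X Y, iparts s k = X ::ₘ M ∧ iparts t k = Y ::ₘ M := by
  induction h generalizing k with
  | root a b c =>
    refine ⟨((if isNode a then {Finset.Ico k (k + nl a)} else 0) + iparts a k)
        + ((if isNode b then {Finset.Ico (k + nl a) (k + nl a + nl b)} else 0)
          + iparts b (k + nl a))
        + ((if isNode c then {Finset.Ico (k + nl a + nl b) (k + nl a + nl b + nl c)} else 0)
          + iparts c (k + nl a + nl b)),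
      Finset.Ico k (k + nl a + nl b), Finset.Ico (k + nl a) (k + nl a + nl b + nl c), ?_, ?_⟩
    · simp only [iparts, isNode_node, if_true, nl_node, ← Nat.add_assoc, ← Multiset.singleton_add]
      abel
    · simp only [iparts, isNode_node, if_true, nl_node, ← Nat.add_assoc, ← Multiset.singleton_add]
      abel
  | @congrL l l' r h ih =>
    obtain ⟨M, X, Y, hs, ht⟩ := ih k
    refine ⟨{Finset.Ico k (k + nl l)} + M + ((if isNode r then
        {Finset.Ico (k + nl l) (k + nl l + nl r)} else 0) + iparts r (k + nl l)), X, Y, ?_, ?_⟩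
    · simp only [iparts, h.isNode_left, if_true, hs, ← Multiset.singleton_add]
      abel
    · simp only [iparts, h.isNode_right, if_true, ht, ← h.nl_eq, ← Multiset.singleton_add]
      abel
  | @congrR l r r' h ih =>
    obtain ⟨M, X, Y, hs, ht⟩ := ih (k + nl l)
    refine ⟨((if isNode l then {Finset.Ico k (k + nl l)} else 0) + iparts l k)
        + ({Finset.Ico (k + nl l) (k + nl l + nl r)} + M), X, Y, ?_, ?_⟩
    · simp only [iparts, h.isNode_left, if_true, hs, ← Multiset.singleton_add]
      abel
    · simp only [iparts, h.isNode_right, if_true, ht, ← h.nl_eq, ← Multiset.singleton_add]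
      abel

lemma _root_.Multiset.card_symmDiff_toFinset_cons_le {α : Type*} [DecidableEq α] (x y : α)
    (m : Multiset α) : (symmDiff (x ::ₘ m).toFinset (y ::ₘ m).toFinset).card ≤ 2 := by
  calc (symmDiff (x ::ₘ m).toFinset (y ::ₘ m).toFinset).card
      ≤ ({x, y} : Finset α).card := by
        refine Finset.card_le_card fun z hz => ?_
        simp only [Finset.mem_symmDiff, Multiset.mem_toFinset, Multiset.mem_cons] at hz
        simp only [Finset.mem_insert, Finset.mem_singleton]
        tauto
    _ ≤ 2 := Finset.card_le_two

theorem rotation_changes_at_most_one_partition (T T' : BT) (h : Move T T') :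
    (symmDiff (iparts T 0).toFinset (iparts T' 0).toFinset).card ≤ 2 := by
  rcases h with h | h
  · obtain ⟨M, X, Y, hT, hT'⟩ := h.exists_iparts_eq_cons 0
    rw [hT, hT']
    exact Multiset.card_symmDiff_toFinset_cons_le X Y M
  · obtain ⟨M, X, Y, hT', hT⟩ := h.exists_iparts_eq_cons 0
    rw [hT, hT', symmDiff_comm]
    exact Multiset.card_symmDiff_toFinset_cons_le X Y M

end BT
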